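/- arXiv:1810.03423 — 3 statements merged into one kernel-verified Lean document; each statement's English description precedes it below -/
import Mathlib

section
/- Let Θ₁,…,Θₙ, Θ, Λ be frames of a family of compatible frames and assume ⊥{Θ₁,…,Θₙ}|Λ. Then: (1) for every permutation σ of {1,…,n}, ⊥{Θ_{σ(1)},…,Θ_{σ(n)}}|Λ; (2) for every subset J ⊆ {1,…,n}, ⊥{Θ_j : j ∈ J}|Λ; (3) if Θ ≤ Θ₁, then ⊥{Θ,Θ₂,…,Θₙ}|Λ; (4) ⊥{Θ₁ ∨ Θ₂, Θ₃,…,Θₙ}|Λ; (5) ⊥{Θ₁ ∨ Λ, Θ₂,…,Θₙ}|Λ. -/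
open scoped NNReal

/-- A family of compatible frames (f.c.f.): a collection of finite nonempty frames
together with (unique) refinings between them, closed under composition, containing
identities, with minimal common refinements (binary joins). -/
structure FCF where
  /-- the frames of the family -/
  Frame : Type
  /-- the elements of each frame -/
  El : Frame → Type
  elFintype : ∀ Θ, Fintype (El Θ)
  elNonempty : ∀ Θ, Nonempty (El Θ)
  /-- `le Θ Λ` holds iff the family contains a refining of `Θ` to `Λ`. -/
  le : Frame → Frame → Prop
  le_refl : ∀ Θ, le Θ Θ
  le_trans : ∀ {Θ Λ Ξ}, le Θ Λ → le Λ Ξ → le Θ Ξ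
  le_antisymm : ∀ {Θ Λ}, le Θ Λ → le Λ Θ → Θ = Λ
  /-- the (unique) refining map of `Θ` to `Λ`, when `le Θ Λ` -/
  τ : ∀ {Θ Λ}, le Θ Λ → El Θ → Set (El Λ)
  τ_nonempty : ∀ {Θ Λ} (h : le Θ Λ) (θ : El Θ), (τ h θ).Nonempty
  τ_disjoint : ∀ {Θ Λ} (h : le Θ Λ) (θ θ' : El Θ), θ ≠ θ' → τ h θ ∩ τ h θ' = ∅
  τ_cover : ∀ {Θ Λ} (h : le Θ Λ) (x : El Λ), ∃ θ, x ∈ τ h θ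
  /-- the identity refining -/
  τ_refl : ∀ {Θ} (h : le Θ Θ) (θ : El Θ), τ h θ = {θ}
  /-- closure under composition of refinings -/
  τ_comp : ∀ {Θ Λ Ξ} (h₁ : le Θ Λ) (h₂ : le Λ Ξ) (h₃ : le Θ Ξ) (θ : El Θ),
    τ h₃ θ = ⋃ lam ∈ τ h₁ θ, τ h₂ lam
  /-- identity of coarsenings: two coarsenings of a frame with the same blocks coincide -/
  coarsening_unique : ∀ {Θ₁ Θ₂ Λ} (h₁ : le Θ₁ Λ) (h₂ : le Θ₂ Λ),
    (∀ θ₁, ∃ θ₂, τ h₁ θ₁ = τ h₂ θ₂) → (∀ θ₂, ∃ θ₁, τ h₁ θ₁ = τ h₂ θ₂) → Θ₁ = Θ₂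
  /-- minimal common refinement of two frames -/
  sup : Frame → Frame → Frame
  le_sup_left : ∀ Θ Λ, le Θ (sup Θ Λ)
  le_sup_right : ∀ Θ Λ, le Λ (sup Θ Λ)
  sup_le : ∀ {Θ Λ Ξ}, le Θ Ξ → le Λ Ξ → le (sup Θ Λ) Ξ
  /-- every element of the minimal common refinement is the (unique) intersection point
  of a block of each factor -/
  sup_atom : ∀ {Θ Λ} (h₁ : le Θ (sup Θ Λ)) (h₂ : le Λ (sup Θ Λ)) (x : El (sup Θ Λ)),
    ∃ (θ : El Θ) (lam : El Λ), τ h₁ θ ∩ τ h₂ lam = {x}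

namespace FCF

instance (F : FCF) (Θ : F.Frame) : Fintype (F.El Θ) := F.elFintype Θ

instance (F : FCF) (Θ : F.Frame) : Nonempty (F.El Θ) := F.elNonempty Θ

instance instSemilatticeSup (F : FCF) : SemilatticeSup F.Frame where
  le := F.le
  le_refl := F.le_refl
  le_trans := fun _ _ _ => F.le_trans
  le_antisymm := fun _ _ => F.le_antisymm
  sup := F.sup
  le_sup_left := F.le_sup_left
  le_sup_right := F.le_sup_right
  sup_le := fun _ _ _ h h' => F.sup_le h h'

/-- the indicator potential `f_p` of the support of a potential -/
noncomputable def fpot {X : Type} (p : X → ℝ≥0) : X → ℝ≥0 := fun x =>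
  haveI := Classical.propDecidable (0 < p x)
  if 0 < p x then 1 else 0

/-- the support of a potential -/
def psupp {X : Type} (p : X → ℝ≥0) : Set X := {x | 0 < p x}

/-- the likelihood (plausibility of singletons) function of a set potential -/
noncomputable def plfn {X : Type} (m : Set X → ℝ≥0) : X → ℝ≥0 :=
  fun x => ∑ᶠ (S : Set X) (_ : x ∈ S), m S

variable (F : FCF)

/-- `θ` and `lam` are compatible: their refinings to the minimal common refinement
of the two frames intersect. -/
def compat {Θ Λ : F.Frame} (θ : F.El Θ) (lam : F.El Λ) : Prop :=
  (F.τ (F.le_sup_left Θ Λ) θ ∩ F.τ (F.le_sup_right Θ Λ) lam).Nonempty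

/-- `(θ₁, θ₂, lam) ∈ R(Θ₁, Θ₂, Λ)`: joint compatibility of a triple. -/
def compat3 {Θ₁ Θ₂ Λ : F.Frame} (θ₁ : F.El Θ₁) (θ₂ : F.El Θ₂) (lam : F.El Λ) : Prop :=
  (F.τ (F.le_trans (F.le_sup_left Θ₁ Θ₂) (F.le_sup_left (F.sup Θ₁ Θ₂) Λ)) θ₁ ∩
    F.τ (F.le_trans (F.le_sup_right Θ₁ Θ₂) (F.le_sup_left (F.sup Θ₁ Θ₂) Λ)) θ₂ ∩
    F.τ (F.le_sup_right (F.sup Θ₁ Θ₂) Λ) lam).Nonempty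

/-- `Θ₁ ⊥ Θ₂ | Λ` : conditional independence of two frames given a third,
`R_λ(Θ₁,Θ₂) = R_λ(Θ₁) × R_λ(Θ₂)` for every `λ ∈ Λ`. -/
def CondIndep (Θ₁ Θ₂ Λ : F.Frame) : Prop :=
  ∀ (lam : F.El Λ) (θ₁ : F.El Θ₁) (θ₂ : F.El Θ₂),
    F.compat3 θ₁ θ₂ lam ↔ (F.compat θ₁ lam ∧ F.compat θ₂ lam)

/-- joint compatibility of a family of elements together with `lam`. -/
def compatFam {ι : Type} {Θ : ι → F.Frame} {Λ : F.Frame}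
    (θ : ∀ i, F.El (Θ i)) (lam : F.El Λ) : Prop :=
  ∃ (Ξ : F.Frame) (hΘ : ∀ i, F.le (Θ i) Ξ) (hΛ : F.le Λ Ξ) (x : F.El Ξ),
    (∀ i, x ∈ F.τ (hΘ i) (θ i)) ∧ x ∈ F.τ hΛ lam

/-- `⊥ {Θ_i : i ∈ ι} | Λ` : conditional independence of a family of frames given `Λ`,
`R_λ(Θ₁,…,Θₙ) = R_λ(Θ₁) × ⋯ × R_λ(Θₙ)` for every `λ ∈ Λ`. -/
def CondIndepFam {ι : Type} (Θ : ι → F.Frame) (Λ : F.Frame) : Prop :=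
  ∀ (lam : F.El Λ) (θ : ∀ i, F.El (Θ i)),
    F.compatFam θ lam ↔ ∀ i, F.compat (θ i) lam

/-- `t_Λ(x)`, the unique element of the coarsening `Λ` whose block contains `x`. -/
noncomputable def proj {Λ Θ : F.Frame} (h : F.le Λ Θ) (x : F.El Θ) : F.El Λ :=
  (F.τ_cover h x).choose

/-- probability potentials on the frame `Θ` -/
abbrev Pot (Θ : F.Frame) : Type := F.El Θ → ℝ≥0

/-- the combination of two probability potentials, on the join of their domains -/
noncomputable def combine {Θ₁ Θ₂ : F.Frame} (p₁ : F.Pot Θ₁) (p₂ : F.Pot Θ₂) :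
    F.Pot (F.sup Θ₁ Θ₂) :=
  fun x => p₁ (F.proj (F.le_sup_left Θ₁ Θ₂) x) * p₂ (F.proj (F.le_sup_right Θ₁ Θ₂) x)

/-- the transport `π_Λ(p)` of a probability potential to the frame `Λ` -/
noncomputable def transport {Θ : F.Frame} (p : F.Pot Θ) (Λ : F.Frame) : F.Pot Λ :=
  fun lam => ∑ᶠ (θ : F.El Θ) (_ : F.compat θ lam), p θ

/-- the max-transport `t^max_Λ(p)` of a probability potential to the frame `Λ` -/
noncomputable def maxTransport {Θ : F.Frame} (p : F.Pot Θ) (Λ : F.Frame) : F.Pot Λ :=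
  fun lam => ⨆ (θ : F.El Θ) (_ : F.compat θ lam), p θ

/-- combination of two set potentials, on the join of their domains -/
noncomputable def setCombine {Θ₁ Θ₂ : F.Frame} (m₁ : Set (F.El Θ₁) → ℝ≥0)
    (m₂ : Set (F.El Θ₂) → ℝ≥0) : Set (F.El (F.sup Θ₁ Θ₂)) → ℝ≥0 :=
  fun S => ∑ᶠ (S₁ : Set (F.El Θ₁)) (S₂ : Set (F.El Θ₂))
    (_ : (⋃ θ ∈ S₁, F.τ (F.le_sup_left Θ₁ Θ₂) θ) ∩
         (⋃ θ ∈ S₂, F.τ (F.le_sup_right Θ₁ Θ₂) θ) = S),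
    m₁ S₁ * m₂ S₂

/-- the conditional `p_{Θ|Λ} = π_Θ(p) · (π_Λ(p))⁻¹` of `p` for `Θ` given `Λ ≤ Θ` -/
noncomputable def condl {Δ : F.Frame} (p : F.Pot Δ) {Λ Θ : F.Frame} (h : F.le Λ Θ) :
    F.Pot Θ :=
  fun θ => F.transport p Θ θ * (F.transport p Λ (F.proj h θ))⁻¹

/-- the conditional `p_{Θ|Λ} = π_{Θ∨Λ}(p) · (π_Λ(p))⁻¹` of `p` for arbitrary `Θ` given `Λ` -/
noncomputable def condl2 {Δ : F.Frame} (p : F.Pot Δ) (Θ Λ : F.Frame) :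
    F.Pot (F.sup Θ Λ) :=
  fun x => F.transport p (F.sup Θ Λ) x *
    (F.transport p Λ (F.proj (F.le_sup_right Θ Λ) x))⁻¹

/-- the solution set `s_p^Λ(lam)`: maximizers of `p` among elements compatible with `lam` -/
noncomputable def solSet {Θ : F.Frame} (p : F.Pot Θ) (Λ : F.Frame) (lam : F.El Λ) :
    Set (F.El Θ) :=
  {θ | F.compat θ lam ∧ p θ = F.maxTransport p Λ lam}

end FCF

namespace FCF


variable {F : FCF}

theorem lift_mem {Θ M Ξ : F.Frame} (h₁ : F.le Θ M) (h₂ : F.le M Ξ) (h₃ : F.le Θ Ξ)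
    {θ : F.El Θ} {y : F.El M} {x : F.El Ξ} (hy : y ∈ F.τ h₁ θ) (hx : x ∈ F.τ h₂ y) :
    x ∈ F.τ h₃ θ := by
  rw [F.τ_comp h₁ h₂ h₃]
  exact Set.mem_biUnion hy hx

theorem eq_of_mem_τ {Θ Ξ : F.Frame} (h : F.le Θ Ξ) {θ θ' : F.El Θ} {x : F.El Ξ}
    (h1 : x ∈ F.τ h θ) (h2 : x ∈ F.τ h θ') : θ = θ' := by
  by_contra hne
  have hd := F.τ_disjoint h θ θ' hne
  have : x ∈ (∅ : Set (F.El Ξ)) := hd ▸ Set.mem_inter h1 h2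
  exact this.elim

theorem restrict_mem {Θ M Ξ : F.Frame} (h₁ : F.le Θ M) (h₂ : F.le M Ξ) (h₃ : F.le Θ Ξ)
    {θ : F.El Θ} {y : F.El M} {x : F.El Ξ} (hxθ : x ∈ F.τ h₃ θ) (hxy : x ∈ F.τ h₂ y) :
    y ∈ F.τ h₁ θ := by
  rw [F.τ_comp h₁ h₂ h₃ θ] at hxθ
  simp only [Set.mem_iUnion] at hxθ
  obtain ⟨z, hz, hxz⟩ := hxθ
  rwa [← eq_of_mem_τ h₂ hxz hxy]

theorem compat_iff_exists {Θ Λ Ξ : F.Frame} (hθ : F.le Θ Ξ) (hlam : F.le Λ Ξ)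
    (θ : F.El Θ) (lam : F.El Λ) :
    F.compat θ lam ↔ ∃ x, x ∈ F.τ hθ θ ∧ x ∈ F.τ hlam lam := by
  have h1 : F.le (F.sup Θ Λ) (F.sup (F.sup Θ Λ) Ξ) := F.le_sup_left _ _
  have h2 : F.le Ξ (F.sup (F.sup Θ Λ) Ξ) := F.le_sup_right _ _
  have hθ' : F.le Θ (F.sup (F.sup Θ Λ) Ξ) := F.le_trans hθ h2
  have hlam' : F.le Λ (F.sup (F.sup Θ Λ) Ξ) := F.le_trans hlam h2
  constructor
  · rintro ⟨z, hzθ, hzl⟩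
    obtain ⟨x', hx'⟩ := F.τ_nonempty h1 z
    obtain ⟨y, hy⟩ := F.τ_cover h2 x'
    exact ⟨y, restrict_mem hθ h2 hθ' (lift_mem (F.le_sup_left Θ Λ) h1 hθ' hzθ hx') hy,
      restrict_mem hlam h2 hlam' (lift_mem (F.le_sup_right Θ Λ) h1 hlam' hzl hx') hy⟩
  · rintro ⟨x, hxθ, hxl⟩
    obtain ⟨x', hx'⟩ := F.τ_nonempty h2 x
    obtain ⟨z, hz⟩ := F.τ_cover h1 x'
    exact ⟨z, restrict_mem (F.le_sup_left Θ Λ) h1 hθ' (lift_mem hθ h2 hθ' hxθ hx') hz,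
      restrict_mem (F.le_sup_right Θ Λ) h1 hlam' (lift_mem hlam h2 hlam' hxl hx') hz⟩

theorem compatFam_iff_exists {ι : Type} {Θ : ι → F.Frame} {Λ Ξ : F.Frame}
    (hΘ : ∀ i, F.le (Θ i) Ξ) (hΛ : F.le Λ Ξ) (θ : ∀ i, F.El (Θ i)) (lam : F.El Λ) :
    F.compatFam θ lam ↔ ∃ x, (∀ i, x ∈ F.τ (hΘ i) (θ i)) ∧ x ∈ F.τ hΛ lam := by
  constructor
  · rintro ⟨Ξ₀, hΘ₀, hΛ₀, x₀, H1, H2⟩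
    have h1 : F.le Ξ₀ (F.sup Ξ₀ Ξ) := F.le_sup_left _ _
    have h2 : F.le Ξ (F.sup Ξ₀ Ξ) := F.le_sup_right _ _
    obtain ⟨x', hx'⟩ := F.τ_nonempty h1 x₀
    obtain ⟨y, hy⟩ := F.τ_cover h2 x'
    refine ⟨y, fun i => ?_, ?_⟩
    · exact restrict_mem (hΘ i) h2 (F.le_trans (hΘ₀ i) h1)
        (lift_mem (hΘ₀ i) h1 (F.le_trans (hΘ₀ i) h1) (H1 i) hx') hy
    · exact restrict_mem hΛ h2 (F.le_trans hΛ₀ h1)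
        (lift_mem hΛ₀ h1 (F.le_trans hΛ₀ h1) H2 hx') hy
  · rintro ⟨x, h1, h2⟩
    exact ⟨Ξ, hΘ, hΛ, x, h1, h2⟩

theorem compat_of_compatFam {ι : Type} {Θ : ι → F.Frame} {Λ : F.Frame}
    {θ : ∀ i, F.El (Θ i)} {lam : F.El Λ} (hfam : F.compatFam θ lam) (i : ι) :
    F.compat (θ i) lam := by
  obtain ⟨Ξ, hΘ, hΛ, x, h1, h2⟩ := hfam
  exact (compat_iff_exists (hΘ i) hΛ _ _).2 ⟨x, h1 i, h2⟩

theorem exists_compat (Θ : F.Frame) {Λ : F.Frame} (lam : F.El Λ) :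
    ∃ θ : F.El Θ, F.compat θ lam := by
  obtain ⟨x, hx⟩ := F.τ_nonempty (F.le_sup_right Θ Λ) lam
  obtain ⟨θ, hθ⟩ := F.τ_cover (F.le_sup_left Θ Λ) x
  exact ⟨θ, x, hθ, hx⟩

theorem mem_τ_cast {Θ₁ Θ₂ Ξ : F.Frame} (e : Θ₁ = Θ₂) (h₁ : F.le Θ₁ Ξ) (h₂ : F.le Θ₂ Ξ)
    (a : F.El Θ₁) (x : F.El Ξ) : x ∈ F.τ h₂ (e ▸ a) ↔ x ∈ F.τ h₁ a := by
  subst e; exact Iff.rfl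

theorem compat_cast {Θ₁ Θ₂ Λ : F.Frame} (e : Θ₁ = Θ₂) (a : F.El Θ₁) (lam : F.El Λ) :
    F.compat (e ▸ a) lam ↔ F.compat a lam := by
  subst e; exact Iff.rfl

theorem mem_τ_index {ι : Type} {Θ : ι → F.Frame} {Ξ : F.Frame} (θ : ∀ i, F.El (Θ i))
    {i₁ i₂ : ι} (e : i₁ = i₂) (h₁ : F.le (Θ i₁) Ξ) (h₂ : F.le (Θ i₂) Ξ) (x : F.El Ξ) :
    x ∈ F.τ h₁ (θ i₁) ↔ x ∈ F.τ h₂ (θ i₂) := by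
  subst e; exact Iff.rfl

/-- Basic properties of conditional independence of a finite family
of frames: invariance under permutation, subfamilies, coarsening of a member, joining
two members, and joining a member with the conditioning frame. -/
theorem condIndepFam_props (F : FCF) (n : ℕ) (Θ : Fin (n + 2) → F.Frame)
    (Λ Θ' : F.Frame) (h : F.CondIndepFam Θ Λ) :
    (∀ σ : Equiv.Perm (Fin (n + 2)), F.CondIndepFam (fun i => Θ (σ i)) Λ) ∧
    (∀ J : Set (Fin (n + 2)), F.CondIndepFam (fun j : J => Θ j) Λ) ∧
    (F.le Θ' (Θ 0) → F.CondIndepFam (Function.update Θ 0 Θ') Λ) ∧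
    (F.CondIndepFam (Fin.cons (F.sup (Θ 0) (Θ 1))
      (fun k : Fin n => Θ k.succ.succ) : Fin (n + 1) → F.Frame) Λ) ∧
    (F.CondIndepFam (Function.update Θ 0 (F.sup (Θ 0) Λ)) Λ) := by
  classical
  have hne : (Finset.univ : Finset (Fin (n + 2))).Nonempty := ⟨0, Finset.mem_univ 0⟩
  set Ξ : F.Frame := F.sup (F.sup Θ' Λ) ((Finset.univ : Finset (Fin (n + 2))).sup' hne Θ)
    with hΞdef
  have hΛΞ : F.le Λ Ξ := F.le_trans (F.le_sup_right Θ' Λ) (F.le_sup_left _ _)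
  have hΘ'Ξ : F.le Θ' Ξ := F.le_trans (F.le_sup_left Θ' Λ) (F.le_sup_left _ _)
  have hΘΞ : ∀ i, F.le (Θ i) Ξ := fun i =>
    F.le_trans (show F.le (Θ i) _ from Finset.le_sup' Θ (Finset.mem_univ i))
      (F.le_sup_right _ _)
  refine ⟨?_, ?_, ?_, ?_, ?_⟩
  -- (1) permutation
  · intro σ lam θv
    constructor
    · exact fun hc i => compat_of_compatFam hc i
    · intro hc
      have hfam := (h lam (fun j => (congrArg Θ (σ.apply_symm_apply j)) ▸ θv (σ.symm j))).2
        (fun j => (compat_cast (congrArg Θ (σ.apply_symm_apply j)) (θv (σ.symm j)) lam).2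
          (hc (σ.symm j)))
      obtain ⟨y, hy, hyl⟩ := (compatFam_iff_exists hΘΞ hΛΞ _ lam).1 hfam
      refine (compatFam_iff_exists (fun i => hΘΞ (σ i)) hΛΞ θv lam).2 ⟨y, fun i => ?_, hyl⟩
      have h1 := (mem_τ_cast (congrArg Θ (σ.apply_symm_apply (σ i)))
        (hΘΞ (σ (σ.symm (σ i)))) (hΘΞ (σ i)) (θv (σ.symm (σ i))) y).1 (hy (σ i))
      exact (mem_τ_index (Θ := fun i => Θ (σ i)) θv (σ.symm_apply_apply i)
        (hΘΞ (σ (σ.symm (σ i)))) (hΘΞ (σ i)) y).1 h1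
  -- (2) subfamily
  · intro J lam θv
    constructor
    · exact fun hc j => compat_of_compatFam hc j
    · intro hc
      choose c hcspec using fun i => exists_compat (F := F) (Θ i) lam
      have hfam := (h lam (fun i => if hJ : i ∈ J then θv ⟨i, hJ⟩ else c i)).2 ?_
      · obtain ⟨y, hy, hyl⟩ := (compatFam_iff_exists hΘΞ hΛΞ _ lam).1 hfam
        refine (compatFam_iff_exists (fun j : J => hΘΞ j) hΛΞ θv lam).2 ⟨y, fun j => ?_, hyl⟩
        have h1 := hy (j : Fin (n + 2))
        rw [show (if hJ : (j : Fin (n + 2)) ∈ J then θv ⟨j, hJ⟩ else c j) = θv j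
          from dif_pos j.2] at h1
        exact h1
      · intro i
        by_cases hJ : i ∈ J
        · rw [show (if hJ' : i ∈ J then θv ⟨i, hJ'⟩ else c i) = θv ⟨i, hJ⟩ from dif_pos hJ]
          exact hc ⟨i, hJ⟩
        · rw [show (if hJ' : i ∈ J then θv ⟨i, hJ'⟩ else c i) = c i from dif_neg hJ]
          exact hcspec i
  -- (3) coarsening
  · intro hle lam θv
    have hUΞ : ∀ i, F.le (Function.update Θ 0 Θ' i) Ξ := by
      intro i
      by_cases h0 : i = 0
      · subst h0; rw [Function.update_self]; exact hΘ'Ξ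
      · rw [Function.update_of_ne h0]; exact hΘΞ i
    constructor
    · exact fun hc i => compat_of_compatFam hc i
    · intro hc
      have e0 : Function.update Θ 0 Θ' 0 = Θ' := Function.update_self 0 Θ' Θ
      have hcθ0 : F.compat (e0 ▸ θv 0) lam := (compat_cast e0 (θv 0) lam).2 (hc 0)
      obtain ⟨x, hxθ, hxl⟩ := (compat_iff_exists hΘ'Ξ hΛΞ (e0 ▸ θv 0) lam).1 hcθ0
      obtain ⟨θ₁, hθ₁⟩ := F.τ_cover (hΘΞ 0) x
      have hθ₁mem : θ₁ ∈ F.τ hle (e0 ▸ θv 0) := restrict_mem hle (hΘΞ 0) hΘ'Ξ hxθ hθ₁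
      have hcθ₁ : F.compat θ₁ lam := (compat_iff_exists (hΘΞ 0) hΛΞ θ₁ lam).2 ⟨x, hθ₁, hxl⟩
      have hfam := (h lam (Fin.cases θ₁ (fun k : Fin (n + 1) =>
          (Function.update_of_ne (Fin.succ_ne_zero k) Θ' Θ) ▸ θv k.succ))).2 ?_
      · obtain ⟨y, hy, hyl⟩ := (compatFam_iff_exists hΘΞ hΛΞ _ lam).1 hfam
        refine (compatFam_iff_exists hUΞ hΛΞ θv lam).2 ⟨y, fun i => ?_, hyl⟩
        induction i using Fin.cases with
        | zero =>
          have hy0 : y ∈ F.τ (hΘΞ 0) θ₁ := hy 0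
          exact (mem_τ_cast e0 (hUΞ 0) hΘ'Ξ (θv 0) y).1
            (lift_mem hle (hΘΞ 0) hΘ'Ξ hθ₁mem hy0)
        | succ k =>
          exact (mem_τ_cast (Function.update_of_ne (Fin.succ_ne_zero k) Θ' Θ)
            (hUΞ k.succ) (hΘΞ k.succ) (θv k.succ) y).1 (hy k.succ)
      · intro j
        induction j using Fin.cases with
        | zero => exact hcθ₁
        | succ k =>
          exact (compat_cast (Function.update_of_ne (Fin.succ_ne_zero k) Θ' Θ)
            (θv k.succ) lam).2 (hc k.succ)
  -- (4) joining two members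
  · intro lam θv
    have hsupΞ : F.le (F.sup (Θ 0) (Θ 1)) Ξ := F.sup_le (hΘΞ 0) (hΘΞ 1)
    have hGΞ : ∀ i : Fin (n + 1),
        F.le ((Fin.cons (F.sup (Θ 0) (Θ 1)) (fun k : Fin n => Θ k.succ.succ) :
          Fin (n + 1) → F.Frame) i) Ξ := by
      intro i
      induction i using Fin.cases with
      | zero => exact hsupΞ
      | succ k => exact hΘΞ k.succ.succ
    constructor
    · exact fun hc i => compat_of_compatFam hc i
    · intro hc
      obtain ⟨θ0, θ1, heq⟩ := F.sup_atom (F.le_sup_left (Θ 0) (Θ 1))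
        (F.le_sup_right (Θ 0) (Θ 1)) (θv 0)
      have hsmem : θv 0 ∈ F.τ (F.le_sup_left (Θ 0) (Θ 1)) θ0 ∩
          F.τ (F.le_sup_right (Θ 0) (Θ 1)) θ1 := by rw [heq]; exact Set.mem_singleton _
      obtain ⟨x, hxs, hxl⟩ := (compat_iff_exists hsupΞ hΛΞ (θv 0) lam).1 (hc 0)
      have hxθ0 : x ∈ F.τ (hΘΞ 0) θ0 :=
        lift_mem (F.le_sup_left (Θ 0) (Θ 1)) hsupΞ (hΘΞ 0) hsmem.1 hxs
      have hxθ1 : x ∈ F.τ (hΘΞ 1) θ1 :=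
        lift_mem (F.le_sup_right (Θ 0) (Θ 1)) hsupΞ (hΘΞ 1) hsmem.2 hxs
      have e1 : Θ 1 = Θ ((0 : Fin (n + 1)).succ) := congrArg Θ Fin.succ_zero_eq_one.symm
      have hfam := (h lam (Fin.cases θ0 (Fin.cases (e1 ▸ θ1)
          (fun k : Fin n => θv k.succ)))).2 ?_
      · obtain ⟨y, hy, hyl⟩ := (compatFam_iff_exists hΘΞ hΛΞ _ lam).1 hfam
        refine (compatFam_iff_exists hGΞ hΛΞ θv lam).2 ⟨y, fun i => ?_, hyl⟩
        induction i using Fin.cases with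
        | zero =>
          obtain ⟨t, hyt⟩ := F.τ_cover hsupΞ y
          have ht0 : t ∈ F.τ (F.le_sup_left (Θ 0) (Θ 1)) θ0 :=
            restrict_mem _ hsupΞ (hΘΞ 0) (hy 0) hyt
          have hy1 : y ∈ F.τ (hΘΞ 1) θ1 :=
            (mem_τ_cast e1 (hΘΞ 1) (hΘΞ ((0 : Fin (n + 1)).succ)) θ1 y).1
              (hy ((0 : Fin (n + 1)).succ))
          have ht1 : t ∈ F.τ (F.le_sup_right (Θ 0) (Θ 1)) θ1 :=
            restrict_mem _ hsupΞ (hΘΞ 1) hy1 hyt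
          have hts : t = θv 0 := by
            have : t ∈ ({θv 0} : Set (F.El (F.sup (Θ 0) (Θ 1)))) := heq ▸ ⟨ht0, ht1⟩
            exact this
          rw [hts] at hyt
          exact hyt
        | succ k => exact hy k.succ.succ
      · intro j
        induction j using Fin.cases with
        | zero => exact (compat_iff_exists (hΘΞ 0) hΛΞ θ0 lam).2 ⟨x, hxθ0, hxl⟩
        | succ k =>
          induction k using Fin.cases with
          | zero =>
            exact (compat_cast e1 θ1 lam).2
              ((compat_iff_exists (hΘΞ 1) hΛΞ θ1 lam).2 ⟨x, hxθ1, hxl⟩)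
          | succ k' => exact hc k'.succ
  -- (5) joining a member with the conditioning frame
  · intro lam θv
    have hsupΞ : F.le (F.sup (Θ 0) Λ) Ξ := F.sup_le (hΘΞ 0) hΛΞ
    have hUΞ : ∀ i, F.le (Function.update Θ 0 (F.sup (Θ 0) Λ) i) Ξ := by
      intro i
      by_cases h0 : i = 0
      · subst h0; rw [Function.update_self]; exact hsupΞ
      · rw [Function.update_of_ne h0]; exact hΘΞ i
    constructor
    · exact fun hc i => compat_of_compatFam hc i
    · intro hc
      have e0 : Function.update Θ 0 (F.sup (Θ 0) Λ) 0 = F.sup (Θ 0) Λ :=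
        Function.update_self 0 (F.sup (Θ 0) Λ) Θ
      obtain ⟨θ0, lam', heq⟩ := F.sup_atom (F.le_sup_left (Θ 0) Λ)
        (F.le_sup_right (Θ 0) Λ) (e0 ▸ θv 0)
      have hsmem : (e0 ▸ θv 0) ∈ F.τ (F.le_sup_left (Θ 0) Λ) θ0 ∩
          F.τ (F.le_sup_right (Θ 0) Λ) lam' := by rw [heq]; exact Set.mem_singleton _
      have hcs : F.compat (e0 ▸ θv 0) lam := (compat_cast e0 (θv 0) lam).2 (hc 0)
      obtain ⟨x, hxs, hxl⟩ := (compat_iff_exists hsupΞ hΛΞ (e0 ▸ θv 0) lam).1 hcs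
      have hxθ0 : x ∈ F.τ (hΘΞ 0) θ0 :=
        lift_mem (F.le_sup_left (Θ 0) Λ) hsupΞ (hΘΞ 0) hsmem.1 hxs
      have hxlam' : x ∈ F.τ hΛΞ lam' :=
        lift_mem (F.le_sup_right (Θ 0) Λ) hsupΞ hΛΞ hsmem.2 hxs
      have hll : lam' = lam := eq_of_mem_τ hΛΞ hxlam' hxl
      subst hll
      have hfam := (h lam' (Fin.cases θ0 (fun k : Fin (n + 1) =>
          (Function.update_of_ne (Fin.succ_ne_zero k) (F.sup (Θ 0) Λ) Θ) ▸ θv k.succ))).2 ?_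
      · obtain ⟨y, hy, hyl⟩ := (compatFam_iff_exists hΘΞ hΛΞ _ lam').1 hfam
        refine (compatFam_iff_exists hUΞ hΛΞ θv lam').2 ⟨y, fun i => ?_, hyl⟩
        induction i using Fin.cases with
        | zero =>
          obtain ⟨t, hyt⟩ := F.τ_cover hsupΞ y
          have ht0 : t ∈ F.τ (F.le_sup_left (Θ 0) Λ) θ0 :=
            restrict_mem _ hsupΞ (hΘΞ 0) (hy 0) hyt
          have ht1 : t ∈ F.τ (F.le_sup_right (Θ 0) Λ) lam' :=
            restrict_mem _ hsupΞ hΛΞ hyl hyt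
          have hts : t = e0 ▸ θv 0 := by
            have : t ∈ ({e0 ▸ θv 0} : Set (F.El (F.sup (Θ 0) Λ))) := heq ▸ ⟨ht0, ht1⟩
            exact this
          rw [hts] at hyt
          exact (mem_τ_cast e0 (hUΞ 0) hsupΞ (θv 0) y).1 hyt
        | succ k =>
          exact (mem_τ_cast (Function.update_of_ne (Fin.succ_ne_zero k) (F.sup (Θ 0) Λ) Θ)
            (hUΞ k.succ) (hΘΞ k.succ) (θv k.succ) y).1 (hy k.succ)
      · intro j
        induction j using Fin.cases with
        | zero => exact (compat_iff_exists (hΘΞ 0) hΛΞ θ0 lam').2 ⟨x, hxθ0, hxl⟩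
        | succ k =>
          exact (compat_cast (Function.update_of_ne (Fin.succ_ne_zero k) (F.sup (Θ 0) Λ) Θ)
            (θv k.succ) lam').2 (hc k.succ)
end FCF
end

section
/- Let (F, R) be a family of compatible frames, Θ₁, Θ₂, Λ ∈ F with Θ₁ ⊥ Θ₂ | Λ, and let τ₁, τ₂ be the refinings of Θ₁, Θ₂ to Θ₁ ∨ Θ₂. Then for every λ ∈ Λ: (1) if (θ₁, θ₂) ∈ R_λ(Θ₁, Θ₂), then τ₁(θ₁) ∩ τ₂(θ₂) = {θ} for a (unique) element θ ∈ R_λ(Θ₁ ∨ Θ₂); (2) if θ ∈ R_λ(Θ₁ ∨ Θ₂), then t_{Θ₁}(θ) ∈ R_λ(Θ₁), t_{Θ₂}(θ) ∈ R_λ(Θ₂), and τ₁(t_{Θ₁}(θ)) ∩ τ₂(t_{Θ₂}(θ)) = {θ}; (3) the map θ ↦ (t_{Θ₁}(θ), t_{Θ₂}(θ)) is a bijection from R_λ(Θ₁ ∨ Θ₂) onto R_λ(Θ₁, Θ₂). -/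
open scoped NNReal

namespace FCF

lemma mem_proj (F : FCF) {Λ Θ : F.Frame} (h : F.le Λ Θ) (x : F.El Θ) :
    x ∈ F.τ h (F.proj h x) := (F.τ_cover h x).choose_spec

lemma proj_eq (F : FCF) {Λ Θ : F.Frame} (h : F.le Λ Θ) {x : F.El Θ} {θ : F.El Λ}
    (hx : x ∈ F.τ h θ) : F.proj h x = θ := by
  by_contra hne
  have := F.τ_disjoint h _ _ hne
  have : x ∈ F.τ h (F.proj h x) ∩ F.τ h θ := ⟨F.mem_proj h x, hx⟩
  rw [F.τ_disjoint h _ _ hne] at this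
  exact this

lemma proj_inter (F : FCF) (Θ₁ Θ₂ : F.Frame) (x : F.El (F.sup Θ₁ Θ₂)) :
    F.τ (F.le_sup_left Θ₁ Θ₂) (F.proj (F.le_sup_left Θ₁ Θ₂) x) ∩
      F.τ (F.le_sup_right Θ₁ Θ₂) (F.proj (F.le_sup_right Θ₁ Θ₂) x) = {x} := by
  obtain ⟨θ₁, θ₂, hs⟩ := F.sup_atom (F.le_sup_left Θ₁ Θ₂) (F.le_sup_right Θ₁ Θ₂) x
  have hx : x ∈ F.τ (F.le_sup_left Θ₁ Θ₂) θ₁ ∩ F.τ (F.le_sup_right Θ₁ Θ₂) θ₂ := by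
    rw [hs]; rfl
  rw [F.proj_eq _ hx.1, F.proj_eq _ hx.2, hs]

lemma compat3_iff (F : FCF) {Θ₁ Θ₂ Λ : F.Frame} (θ₁ : F.El Θ₁) (θ₂ : F.El Θ₂)
    (lam : F.El Λ) :
    F.compat3 θ₁ θ₂ lam ↔ ∃ x : F.El (F.sup Θ₁ Θ₂),
      x ∈ F.τ (F.le_sup_left Θ₁ Θ₂) θ₁ ∧ x ∈ F.τ (F.le_sup_right Θ₁ Θ₂) θ₂ ∧
      F.compat x lam := by
  set hbl := F.le_sup_left (F.sup Θ₁ Θ₂) Λ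
  set hbr := F.le_sup_right (F.sup Θ₁ Θ₂) Λ
  have hc₁ := F.τ_comp (F.le_sup_left Θ₁ Θ₂) hbl (F.le_trans (F.le_sup_left Θ₁ Θ₂) hbl) θ₁
  have hc₂ := F.τ_comp (F.le_sup_right Θ₁ Θ₂) hbl (F.le_trans (F.le_sup_right Θ₁ Θ₂) hbl) θ₂
  constructor
  · rintro ⟨y, ⟨hy₁, hy₂⟩, hyl⟩
    rw [hc₁] at hy₁; rw [hc₂] at hy₂
    simp only [Set.mem_iUnion] at hy₁ hy₂
    obtain ⟨x₁, hx₁, hyx₁⟩ := hy₁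
    obtain ⟨x₂, hx₂, hyx₂⟩ := hy₂
    have hxx : x₁ = x₂ := by
      by_contra hne
      have := F.τ_disjoint hbl _ _ hne
      have : y ∈ F.τ hbl x₁ ∩ F.τ hbl x₂ := ⟨hyx₁, hyx₂⟩
      rw [F.τ_disjoint hbl _ _ hne] at this
      exact this
    exact ⟨x₁, hx₁, hxx ▸ hx₂, ⟨y, hyx₁, hyl⟩⟩
  · rintro ⟨x, hx₁, hx₂, y, hyx, hyl⟩
    refine ⟨y, ⟨?_, ?_⟩, hyl⟩
    · rw [hc₁]; simp only [Set.mem_iUnion]; exact ⟨x, hx₁, hyx⟩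
    · rw [hc₂]; simp only [Set.mem_iUnion]; exact ⟨x, hx₂, hyx⟩

/-- If `Θ₁ ⊥ Θ₂ | Λ`, then for every `λ ∈ Λ`: (1) each pair in
`R_λ(Θ₁,Θ₂)` determines a unique point of `R_λ(Θ₁ ∨ Θ₂)`; (2) each `θ ∈ R_λ(Θ₁ ∨ Θ₂)`
projects to a pair in `R_λ(Θ₁) × R_λ(Θ₂)` whose blocks intersect exactly in `θ`;
(3) `θ ↦ (t_{Θ₁}(θ), t_{Θ₂}(θ))` is a bijection of `R_λ(Θ₁ ∨ Θ₂)` onto `R_λ(Θ₁,Θ₂)`. -/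
theorem condIndep_sup_bijection (F : FCF) (Θ₁ Θ₂ Λ : F.Frame)
    (hCI : F.CondIndep Θ₁ Θ₂ Λ) (lam : F.El Λ) :
    (∀ (θ₁ : F.El Θ₁) (θ₂ : F.El Θ₂), F.compat3 θ₁ θ₂ lam →
      ∃ θ : F.El (F.sup Θ₁ Θ₂),
        F.τ (F.le_sup_left Θ₁ Θ₂) θ₁ ∩ F.τ (F.le_sup_right Θ₁ Θ₂) θ₂ = {θ} ∧
        F.compat θ lam) ∧
    (∀ θ : F.El (F.sup Θ₁ Θ₂), F.compat θ lam →
      F.compat (F.proj (F.le_sup_left Θ₁ Θ₂) θ) lam ∧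
      F.compat (F.proj (F.le_sup_right Θ₁ Θ₂) θ) lam ∧
      F.τ (F.le_sup_left Θ₁ Θ₂) (F.proj (F.le_sup_left Θ₁ Θ₂) θ) ∩
        F.τ (F.le_sup_right Θ₁ Θ₂) (F.proj (F.le_sup_right Θ₁ Θ₂) θ) = {θ}) ∧
    (Set.BijOn
      (fun θ => (F.proj (F.le_sup_left Θ₁ Θ₂) θ, F.proj (F.le_sup_right Θ₁ Θ₂) θ))
      {θ : F.El (F.sup Θ₁ Θ₂) | F.compat θ lam}
      {q : F.El Θ₁ × F.El Θ₂ | F.compat3 q.1 q.2 lam}) := by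
  have key : ∀ θ : F.El (F.sup Θ₁ Θ₂), F.compat θ lam →
      F.τ (F.le_sup_left Θ₁ Θ₂) (F.proj (F.le_sup_left Θ₁ Θ₂) θ) ∩
        F.τ (F.le_sup_right Θ₁ Θ₂) (F.proj (F.le_sup_right Θ₁ Θ₂) θ) = {θ} :=
    fun θ _ => F.proj_inter Θ₁ Θ₂ θ
  have part1 : ∀ (θ₁ : F.El Θ₁) (θ₂ : F.El Θ₂), F.compat3 θ₁ θ₂ lam →
      ∃ θ : F.El (F.sup Θ₁ Θ₂),
        F.τ (F.le_sup_left Θ₁ Θ₂) θ₁ ∩ F.τ (F.le_sup_right Θ₁ Θ₂) θ₂ = {θ} ∧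
        F.compat θ lam := by
    intro θ₁ θ₂ h3
    obtain ⟨x, hx₁, hx₂, hxc⟩ := (F.compat3_iff θ₁ θ₂ lam).1 h3
    refine ⟨x, ?_, hxc⟩
    have := F.proj_inter Θ₁ Θ₂ x
    rwa [F.proj_eq _ hx₁, F.proj_eq _ hx₂] at this
  have part2 : ∀ θ : F.El (F.sup Θ₁ Θ₂), F.compat θ lam →
      F.compat (F.proj (F.le_sup_left Θ₁ Θ₂) θ) lam ∧
      F.compat (F.proj (F.le_sup_right Θ₁ Θ₂) θ) lam := by
    intro θ hθ
    have h3 : F.compat3 (F.proj (F.le_sup_left Θ₁ Θ₂) θ)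
        (F.proj (F.le_sup_right Θ₁ Θ₂) θ) lam :=
      (F.compat3_iff _ _ lam).2 ⟨θ, F.mem_proj _ θ, F.mem_proj _ θ, hθ⟩
    exact (hCI lam _ _).1 h3
  refine ⟨part1, fun θ hθ => ⟨(part2 θ hθ).1, (part2 θ hθ).2, key θ hθ⟩, ?_, ?_, ?_⟩
  · intro θ hθ
    exact (F.compat3_iff _ _ lam).2 ⟨θ, F.mem_proj _ θ, F.mem_proj _ θ, hθ⟩
  · intro θ hθ θ' hθ' heq
    have h1 : F.proj (F.le_sup_left Θ₁ Θ₂) θ = F.proj (F.le_sup_left Θ₁ Θ₂) θ' :=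
      congrArg Prod.fst heq
    have h2 : F.proj (F.le_sup_right Θ₁ Θ₂) θ = F.proj (F.le_sup_right Θ₁ Θ₂) θ' :=
      congrArg Prod.snd heq
    have hmem : θ' ∈ F.τ (F.le_sup_left Θ₁ Θ₂) (F.proj (F.le_sup_left Θ₁ Θ₂) θ) ∩
        F.τ (F.le_sup_right Θ₁ Θ₂) (F.proj (F.le_sup_right Θ₁ Θ₂) θ) := by
      rw [h1, h2]; exact ⟨F.mem_proj _ θ', F.mem_proj _ θ'⟩
    rw [F.proj_inter Θ₁ Θ₂ θ] at hmem
    exact hmem.symm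
  · rintro ⟨θ₁, θ₂⟩ h3
    obtain ⟨x, hx₁, hx₂, hxc⟩ := (F.compat3_iff θ₁ θ₂ lam).1 h3
    exact ⟨x, hxc, by simp [F.proj_eq _ hx₁, F.proj_eq _ hx₂]⟩

end FCF
end

section
/- Let Λ ≤ Λ₁ ≤ Θ be frames of a family of compatible frames and let p, q be probability potentials with d(p) = Θ and d(q) = Λ. Then π_{Λ₁}(p · q) = π_{Λ₁}(p) · q. -/
open scoped NNReal

/-!
If `Λ ≤ Θ`, the join `Θ ∨ Λ` is a copy of `Θ` (the projection to `Θ` is a bijection), and an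
element of a frame is compatible with an element `λ₁` of a coarser frame exactly when it
projects to `λ₁`. Both sides of the identity are therefore sums over the block of `λ₁` in `Θ`,
and on that block `q ∘ t_Λ` is constant, equal to `q (t_Λ λ₁)`.
-/

namespace FCF

section

variable {F : FCF}

lemma mem_τ_proj {Λ Θ : F.Frame} (h : F.le Λ Θ) (x : F.El Θ) : x ∈ F.τ h (F.proj h x) :=
  (F.τ_cover h x).choose_spec

lemma mem_τ_iff_proj_eq {Λ Θ : F.Frame} (h : F.le Λ Θ) {x : F.El Θ} {lam : F.El Λ} :
    x ∈ F.τ h lam ↔ F.proj h x = lam := by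
  refine ⟨fun hx => ?_, fun hx => hx ▸ mem_τ_proj h x⟩
  by_contra hne
  have hx' : x ∈ F.τ h (F.proj h x) ∩ F.τ h lam := ⟨mem_τ_proj h x, hx⟩
  rw [F.τ_disjoint h _ _ hne] at hx'
  exact hx'

lemma proj_trans {Λ Θ Ξ : F.Frame} (h₁ : F.le Λ Θ) (h₂ : F.le Θ Ξ) (x : F.El Ξ) :
    F.proj (F.le_trans h₁ h₂) x = F.proj h₁ (F.proj h₂ x) := by
  rw [← mem_τ_iff_proj_eq, F.τ_comp h₁ h₂]
  exact Set.mem_biUnion (mem_τ_proj h₁ _) (mem_τ_proj h₂ x)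

lemma proj_refl {Θ : F.Frame} (h : F.le Θ Θ) (x : F.El Θ) : F.proj h x = x := by
  rw [← mem_τ_iff_proj_eq, F.τ_refl h]
  rfl

noncomputable def projEquiv {Θ Λ : F.Frame} (h₁ : F.le Θ Λ) (h₂ : F.le Λ Θ) :
    F.El Λ ≃ F.El Θ where
  toFun := F.proj h₁
  invFun := F.proj h₂
  left_inv x := by rw [← proj_trans, proj_refl]
  right_inv x := by rw [← proj_trans, proj_refl]

lemma compat_iff_proj_eq {Λ Θ : F.Frame} (h : F.le Λ Θ) (θ : F.El Θ) (lam : F.El Λ) :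
    F.compat θ lam ↔ F.proj h θ = lam := by
  have hright (x : F.El (F.sup Θ Λ)) :
      F.proj (F.le_sup_right Θ Λ) x = F.proj h (F.proj (F.le_sup_left Θ Λ) x) :=
    proj_trans h (F.le_sup_left Θ Λ) x
  constructor
  · rintro ⟨x, hxθ, hxlam⟩
    rw [mem_τ_iff_proj_eq] at hxθ hxlam
    rwa [hright, hxθ] at hxlam
  · intro hθ
    obtain ⟨x, hx⟩ := F.τ_nonempty (F.le_sup_left Θ Λ) θ
    refine ⟨x, hx, ?_⟩
    rw [mem_τ_iff_proj_eq] at hx ⊢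
    rw [hright, hx, hθ]

lemma transport_eq_sum_proj_eq {Λ Θ : F.Frame} [DecidableEq (F.El Λ)] (h : F.le Λ Θ)
    (p : F.Pot Θ) (lam : F.El Λ) :
    F.transport p Λ lam = ∑ θ with F.proj h θ = lam, p θ := by
  simp only [transport, compat_iff_proj_eq h]
  exact finsum_cond_eq_sum_of_cond_iff _ fun _ => by simp

lemma combine_apply_of_le {Θ Λ : F.Frame} (h : F.le Λ Θ) (p : F.Pot Θ) (q : F.Pot Λ)
    (x : F.El (F.sup Θ Λ)) :
    F.combine p q x =
      p (F.proj (F.le_sup_left Θ Λ) x) * q (F.proj h (F.proj (F.le_sup_left Θ Λ) x)) := by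
  rw [combine, ← proj_trans]

end

/-- If `Λ ≤ Λ₁ ≤ Θ`, `d(p) = Θ` and `d(q) = Λ`, then
`π_{Λ₁}(p · q) = π_{Λ₁}(p) · q`. -/
theorem transport_combine_of_le (F : FCF) (Θ Λ Λ₁ : F.Frame)
    (hΛΛ₁ : F.le Λ Λ₁) (hΛ₁Θ : F.le Λ₁ Θ) (p : F.Pot Θ) (q : F.Pot Λ) :
    F.transport (F.combine p q) Λ₁ =
      fun x => F.transport p Λ₁ x * q (F.proj hΛΛ₁ x) := by
  classical
  funext lam
  have hΛΘ : F.le Λ Θ := F.le_trans hΛΛ₁ hΛ₁Θ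
  let e := projEquiv (F.le_sup_left Θ Λ) (F.sup_le (F.le_refl Θ) hΛΘ)
  calc F.transport (F.combine p q) Λ₁ lam
      = ∑ x with F.proj hΛ₁Θ (e x) = lam, p (e x) * q (F.proj hΛΘ (e x)) := by
        rw [transport_eq_sum_proj_eq (F.le_trans hΛ₁Θ (F.le_sup_left Θ Λ))]
        simp only [proj_trans hΛ₁Θ (F.le_sup_left Θ Λ), combine_apply_of_le hΛΘ]
        rfl
    _ = ∑ θ with F.proj hΛ₁Θ θ = lam, p θ * q (F.proj hΛΘ θ) :=
        Finset.sum_equiv e (by simp) (fun _ _ => rfl)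
    _ = ∑ θ with F.proj hΛ₁Θ θ = lam, p θ * q (F.proj hΛΛ₁ lam) := by
        refine Finset.sum_congr rfl fun θ hθ => ?_
        rw [proj_trans hΛΛ₁ hΛ₁Θ, (Finset.mem_filter.1 hθ).2]
    _ = F.transport p Λ₁ lam * q (F.proj hΛΛ₁ lam) := by
        rw [← Finset.sum_mul, transport_eq_sum_proj_eq hΛ₁Θ]

end FCF
end
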